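/- With the setup of the chance-constrained feasibility set: the set of x satisfying P(x + ξ ∈ P) ≥ 1 − η (with 0 < η ≤ 1/2, ξ ∼ N(0,Σ)) is contained in the polytope P_m = {x : ω_i^⊤ x ≤ b_i − ‖Σ^{1/2}ω_i‖₂ Φ^{-1}(1−η) for all i}. Hence adding the constraint x ∈ P_m to the chance-constrained optimization problem does not change its set of optimal solutions. -/

import Mathlib

open MeasureTheory ProbabilityTheory

open scoped ComplexOrder in
/-- The positive semidefinite square root of a positive semidefinite matrix (the definition
`Matrix.PosSemidef.sqrt` of the older Mathlib, removed since). -/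
noncomputable def Matrix.PosSemidef.sqrt {n : Type*} [Fintype n] [DecidableEq n] {𝕜 : Type*}
    [RCLike 𝕜] {A : Matrix n n 𝕜} (hA : A.PosSemidef) : Matrix n n 𝕜 :=
  (hA.1.eigenvectorUnitary : Matrix n n 𝕜) * Matrix.diagonal ((↑) ∘ (√·) ∘ hA.1.eigenvalues) *
    (star hA.1.eigenvectorUnitary : Matrix n n 𝕜)

/-- The standard normal CDF `Φ`. -/
noncomputable def stdNormalCDF : ℝ → ℝ := fun x => cdf (gaussianReal 0 1) x

/-- The standard normal quantile function `Φ⁻¹`. -/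
noncomputable def stdNormalQuantile : ℝ → ℝ := Function.invFun stdNormalCDF

/-!
Fix a constraint `i` and put `σᵢ = ‖Σ^{1/2} ωᵢ‖₂`. The event `x + ξ ∈ P` is contained in
`ωᵢᵀ ξ ≤ bᵢ - ωᵢᵀ x`, and `ωᵢᵀ ξ ∼ N(0, σᵢ²)`, so a feasible `x` satisfies
`1 - η ≤ Φ((bᵢ - ωᵢᵀ x) / σᵢ)` (for `σᵢ = 0`, simply `0 ≤ bᵢ - ωᵢᵀ x`). Since `1 - η ∈ (0, 1)` and
`Φ` is a continuous increasing bijection `ℝ → (0, 1)`, this is `σᵢ Φ⁻¹(1 - η) ≤ bᵢ - ωᵢᵀ x`.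
Hence `F ⊆ P_m`, so `F ∩ P_m = F` and the two problems have the same minimisers.
-/

open Set NNReal

theorem StieltjesFunction.continuous_of_nullSingletonClass (f : StieltjesFunction ℝ)
    [NullSingletonClass f.measure] : Continuous f := by
  refine continuous_iff_continuousAt.2 fun x => ?_
  have hleft : Function.leftLim f x = f x := by
    have hx := f.measure_singleton x
    rw [MeasureTheory.measure_singleton, eq_comm, ENNReal.ofReal_eq_zero, sub_nonpos] at hx
    exact le_antisymm (f.mono.leftLim_le le_rfl) hx
  rw [continuousAt_iff_continuous_left_right, ← continuousWithinAt_Iio_iff_Iic,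
    f.mono.continuousWithinAt_Iio_iff_leftLim_eq]
  exact ⟨hleft, f.right_continuous x⟩

namespace ProbabilityTheory

variable {μ : Measure ℝ} [IsProbabilityMeasure μ]

theorem continuous_cdf [NullSingletonClass μ] : Continuous (cdf μ) := by
  have : NullSingletonClass (cdf μ).measure := by rwa [measure_cdf]
  exact (cdf μ).continuous_of_nullSingletonClass

theorem strictMono_cdf (hμ : volume ≪ μ) : StrictMono (cdf μ) := by
  intro x y hxy
  have hpos : 0 < μ (Ioc x y) :=
    pos_of_ne_zero fun h => by simpa [hxy.not_ge] using hμ h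
  rwa [← measure_cdf μ, StieltjesFunction.measure_Ioc, ENNReal.ofReal_pos, sub_pos] at hpos

end ProbabilityTheory

open ProbabilityTheory

theorem nullSingletonClass_gaussianReal (m : ℝ) {v : ℝ≥0} (hv : v ≠ 0) :
    NullSingletonClass (gaussianReal m v) := by
  rw [gaussianReal_of_var_ne_zero _ hv]
  infer_instance

theorem stdNormalCDF_stdNormalQuantile {p : ℝ} (hp₀ : 0 < p) (hp₁ : p < 1) :
    stdNormalCDF (stdNormalQuantile p) = p := by
  have := nullSingletonClass_gaussianReal 0 one_ne_zero
  refine Function.invFun_eq (mem_range_of_exists_le_of_exists_ge continuous_cdf ?_ ?_)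
  · exact ((tendsto_cdf_atBot _).eventually_lt_const hp₀).exists.imp fun _ => le_of_lt
  · exact ((tendsto_cdf_atTop _).eventually_const_lt hp₁).exists.imp fun _ => le_of_lt

theorem stdNormalQuantile_le_iff {p t : ℝ} (hp₀ : 0 < p) (hp₁ : p < 1) :
    stdNormalQuantile p ≤ t ↔ p ≤ stdNormalCDF t := by
  conv_rhs => rw [← stdNormalCDF_stdNormalQuantile hp₀ hp₁]
  exact (strictMono_cdf (gaussianReal_absolutelyContinuous' 0 one_ne_zero)).le_iff_le.symm

theorem gaussianReal_real_Iic {v : ℝ≥0} (hv : v ≠ 0) (t : ℝ) :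
    (gaussianReal 0 v).real (Iic t) = stdNormalCDF (t / √v) := by
  have hσ : 0 < √(v : ℝ) := Real.sqrt_pos.2 (by positivity)
  have hmap : gaussianReal 0 v = (gaussianReal 0 1).map (√(v : ℝ) * ·) := by
    rw [gaussianReal_map_const_mul, mul_zero, mul_one]
    congr
    ext
    simp
  have hpre : (√(v : ℝ) * ·) ⁻¹' Iic t = Iic (t / √v) := by
    ext y
    simp [le_div_iff₀ hσ, mul_comm]
  rw [hmap, map_measureReal_apply (measurable_const_mul _) measurableSet_Iic, hpre,
    stdNormalCDF, cdf_eq_real]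

theorem sqrt_mul_stdNormalQuantile_le {v : ℝ≥0} {p t : ℝ} (hp₀ : 0 < p) (hp₁ : p < 1)
    (h : p ≤ (gaussianReal 0 v).real (Iic t)) : √v * stdNormalQuantile p ≤ t := by
  rcases eq_or_ne v 0 with rfl | hv
  · have ht : 0 ≤ t := by
      by_contra! ht
      simp [gaussianReal_zero_var, measureReal_def, ht.not_ge] at h
      linarith
    simpa using ht
  · rw [gaussianReal_real_Iic hv, ← stdNormalQuantile_le_iff hp₀ hp₁,
      le_div_iff₀ (Real.sqrt_pos.2 (by positivity))] at h
    rwa [mul_comm]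

theorem measureReal_le_of_map_eq_of_subset_preimage {Ω α : Type*} [MeasurableSpace Ω]
    [MeasurableSpace α] {P : Measure Ω} [IsFiniteMeasure P] {X : Ω → α} {ν : Measure α} [NeZero ν]
    (hX : P.map X = ν) {E : Set Ω} {s : Set α} (hs : MeasurableSet s) (hE : E ⊆ X ⁻¹' s) :
    P.real E ≤ ν.real s := by
  have hXm : AEMeasurable X P := aemeasurable_of_map_neZero (by rw [hX]; infer_instance)
  rw [← hX, map_measureReal_apply_of_aemeasurable hXm hs]
  exact measureReal_mono hE

theorem feasible_subset_Pm_and_argmin_invariant_general {n J : ℕ} {Ω : Type*} [MeasurableSpace Ω]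
    (P : Measure Ω) [IsProbabilityMeasure P]
    (S : Matrix (Fin n) (Fin n) ℝ) (hS : S.PosDef)
    (ξ : Ω → Fin n → ℝ)
    (hξ : ∀ v : Fin n → ℝ,
      Measure.map (fun a => ∑ i, v i * ξ a i) P
        = gaussianReal 0 (∑ i, (hS.posSemidef.sqrt.mulVec v i) ^ 2).toNNReal)
    (ω : Fin J → Fin n → ℝ) (b : Fin J → ℝ)
    (η : ℝ) (hη₀ : 0 < η) (hη₁ : η ≤ 1 / 2)
    (F Pm : Set (Fin n → ℝ))
    (hF : F = {x | 1 - η ≤ (P {a | ∀ i, ∑ k, ω i k * (x k + ξ a k) ≤ b i}).toReal})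
    (hPm : Pm = {x | ∀ i, ∑ k, ω i k * x k
        ≤ b i - Real.sqrt (∑ k, (hS.posSemidef.sqrt.mulVec (ω i) k) ^ 2)
                  * stdNormalQuantile (1 - η)}) :
    F ⊆ Pm ∧
      ∀ cost : (Fin n → ℝ) → ℝ,
        {x ∈ F ∩ Pm | ∀ y ∈ F ∩ Pm, cost x ≤ cost y}
          = {x ∈ F | ∀ y ∈ F, cost x ≤ cost y} := by
  have hF_sub : F ⊆ Pm := by
    subst hF hPm
    intro x hx i
    have hevent : {a | ∀ j, ∑ k, ω j k * (x k + ξ a k) ≤ b j}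
        ⊆ (fun a => ∑ k, ω i k * ξ a k) ⁻¹' Iic (b i - ∑ k, ω i k * x k) := by
      intro a ha
      have hai := ha i
      simp only [mul_add, Finset.sum_add_distrib] at hai
      simp only [mem_preimage, mem_Iic]
      linarith
    have key := sqrt_mul_stdNormalQuantile_le (by linarith) (by linarith)
      (hx.trans (measureReal_le_of_map_eq_of_subset_preimage (hξ (ω i)) measurableSet_Iic hevent))
    rw [Real.coe_toNNReal _ (by positivity)] at key
    show _ ≤ _
    linarith
  exact ⟨hF_sub, fun cost => by rw [inter_eq_left.2 hF_sub]⟩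

/-- The chance-constrained feasibility set `{x : P(x + ξ ∈ P) ≥ 1-η}` is contained in the
polytope `P_m = {x : ωᵢᵀx ≤ bᵢ - ‖Σ^{1/2}ωᵢ‖₂ Φ⁻¹(1-η) ∀i}`; hence adding the constraint
`x ∈ P_m` does not change the set of optimal solutions of the chance-constrained problem. -/
theorem feasible_subset_Pm_and_argmin_invariant {n J : ℕ} {Ω : Type*} [MeasurableSpace Ω]
    (P : Measure Ω) [IsProbabilityMeasure P]
    (S : Matrix (Fin n) (Fin n) ℝ) (hS : S.PosDef)
    (ξ : Ω → Fin n → ℝ)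
    (hξ : ∀ v : Fin n → ℝ,
      Measure.map (fun a => ∑ i, v i * ξ a i) P
        = gaussianReal 0 (∑ i, (hS.posSemidef.sqrt.mulVec v i) ^ 2).toNNReal)
    (ω : Fin J → Fin n → ℝ) (hω : ∀ i, ω i ≠ 0) (b : Fin J → ℝ)
    (η : ℝ) (hη₀ : 0 < η) (hη₁ : η ≤ 1 / 2)
    (F Pm : Set (Fin n → ℝ))
    (hF : F = {x | 1 - η ≤ (P {a | ∀ i, ∑ k, ω i k * (x k + ξ a k) ≤ b i}).toReal})
    (hPm : Pm = {x | ∀ i, ∑ k, ω i k * x k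
        ≤ b i - Real.sqrt (∑ k, (hS.posSemidef.sqrt.mulVec (ω i) k) ^ 2)
                  * stdNormalQuantile (1 - η)}) :
    F ⊆ Pm ∧
      ∀ cost : (Fin n → ℝ) → ℝ,
        {x ∈ F ∩ Pm | ∀ y ∈ F ∩ Pm, cost x ≤ cost y}
          = {x ∈ F | ∀ y ∈ F, cost x ≤ cost y} :=
  feasible_subset_Pm_and_argmin_invariant_general P S hS ξ hξ ω b η hη₀ hη₁ F Pm hF hPm
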